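/- arXiv:1306.5966 — 7 statements merged into one kernel-verified Lean document; each statement's English description precedes it below -/
import Mathlib

section
/- Let R > 0, R_g ∈ ℝ, k ≥ 0, and let ρ : [0,R] → ℝ be continuous with ρ(r) ≥ 0 for all r ∈ [0,R]. Let χ : [0,R] → ℝ be twice continuously differentiable with χ''(r) = k·ρ(r)·χ(r) for all r ∈ [0,R], χ(0) = 0, χ'(R) = 1, and χ(R) = R − R_g. Then R_g ≤ R. Equivalently, the gravitational mass M_g defined by R_g = G·M_g/(2c²) (with G, c > 0) satisfies M_g ≤ 2c²R/G. -/
/-! Suppose `χ R < 0` and let `c` be the last zero of `χ` before `R`. On `(c, R]` we have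
`χ < 0`, so `χ'' = kρχ ≤ 0` there: `χ` is concave on `[c, R]`, hence its secant slope over
`[c, R]` is at least `χ' R = 1 > 0`, which forces `χ R > χ c = 0`. -/

open Set

theorem mul_sub_le_image_sub_of_second_deriv_nonpos {f f' f'' : ℝ → ℝ} {a b : ℝ} (hab : a ≤ b)
    (hf : ∀ x ∈ Icc a b, HasDerivWithinAt f (f' x) (Icc a b) x)
    (hf' : ∀ x ∈ Icc a b, HasDerivWithinAt f' (f'' x) (Icc a b) x)
    (hf''_nonpos : ∀ x ∈ Ioo a b, f'' x ≤ 0) :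
    f' b * (b - a) ≤ f b - f a := by
  have hderivAt {g g' : ℝ → ℝ} (hg : ∀ x ∈ Icc a b, HasDerivWithinAt g (g' x) (Icc a b) x)
      (x : ℝ) (hx : x ∈ Ioo a b) : HasDerivAt g (g' x) x :=
    (hg x (Ioo_subset_Icc_self hx)).hasDerivAt (Icc_mem_nhds hx.1 hx.2)
  have hf'_anti : AntitoneOn f' (Icc a b) := by
    refine antitoneOn_of_hasDerivWithinAt_nonpos (f' := f'') (convex_Icc a b)
      (fun x hx => (hf' x hx).continuousWithinAt) (fun x hx => ?_) (fun x hx => ?_)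
    · rw [interior_Icc] at hx ⊢
      exact (hderivAt hf' x hx).hasDerivWithinAt
    · rw [interior_Icc] at hx
      exact hf''_nonpos x hx
  have hmono : MonotoneOn (fun x => f x - f' b * x) (Icc a b) := by
    refine monotoneOn_of_hasDerivWithinAt_nonneg (f' := fun x => f' x - f' b) (convex_Icc a b)
      (fun x hx => (hf x hx).continuousWithinAt.sub
        (continuousWithinAt_const.mul continuousWithinAt_id)) (fun x hx => ?_) (fun x hx => ?_)
    · rw [interior_Icc] at hx ⊢
      have hlin : HasDerivAt (fun x => f' b * x) (f' b) x := by
        simpa using (hasDerivAt_id x).const_mul (f' b)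
      exact ((hderivAt hf x hx).fun_sub hlin).hasDerivWithinAt
    · rw [interior_Icc] at hx
      exact sub_nonneg.2 (hf'_anti (Ioo_subset_Icc_self hx) (right_mem_Icc.2 hab) hx.2.le)
  have hends := hmono (left_mem_Icc.2 hab) (right_mem_Icc.2 hab) hab
  simp only at hends
  linarith

theorem exists_last_zero_of_nonneg_of_neg {f : ℝ → ℝ} {a b : ℝ} (hab : a ≤ b)
    (hf : ContinuousOn f (Icc a b)) (ha : 0 ≤ f a) (hb : f b < 0) :
    ∃ c ∈ Ico a b, f c = 0 ∧ ∀ x ∈ Ioc c b, f x < 0 := by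
  set Z := Icc a b ∩ f ⁻¹' {0}
  have hZ_compact : IsCompact Z :=
    isCompact_Icc.of_isClosed_subset
      (hf.preimage_isClosed_of_isClosed isClosed_Icc isClosed_singleton) inter_subset_left
  obtain ⟨z, hz, hfz⟩ := intermediate_value_Icc' hab hf ⟨hb.le, ha⟩
  obtain ⟨c, ⟨hc, hfc⟩, hc_max⟩ := hZ_compact.exists_isGreatest ⟨z, hz, hfz⟩
  have hcb : c < b := lt_of_le_of_ne hc.2 (by rintro rfl; simp_all)
  refine ⟨c, ⟨hc.1, hcb⟩, hfc, fun x hx => ?_⟩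
  by_contra! hfx
  have hxb : Icc x b ⊆ Icc a b := Icc_subset_Icc (hc.1.trans hx.1.le) le_rfl
  obtain ⟨y, hy, hfy⟩ := intermediate_value_Icc' hx.2 (hf.mono hxb) ⟨hb.le, hfx⟩
  have : y ≤ c := hc_max ⟨hxb hy, hfy⟩
  linarith [hx.1, hy.1]

theorem nonneg_of_second_deriv_nonpos_where_neg {f f' f'' : ℝ → ℝ} {a b : ℝ} (hab : a ≤ b)
    (hf : ∀ x ∈ Icc a b, HasDerivWithinAt f (f' x) (Icc a b) x)
    (hf' : ∀ x ∈ Icc a b, HasDerivWithinAt f' (f'' x) (Icc a b) x)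
    (hf''_nonpos : ∀ x ∈ Ioo a b, f x < 0 → f'' x ≤ 0)
    (ha : 0 ≤ f a) (hf'b : 0 ≤ f' b) :
    0 ≤ f b := by
  by_contra! hb
  obtain ⟨c, hc, hfc, hneg⟩ := exists_last_zero_of_nonneg_of_neg hab
    (fun x hx => (hf x hx).continuousWithinAt) ha hb
  have hsub : Icc c b ⊆ Icc a b := Icc_subset_Icc hc.1 le_rfl
  have hslope := mul_sub_le_image_sub_of_second_deriv_nonpos hc.2.le
    (fun x hx => (hf x (hsub hx)).mono hsub) (fun x hx => (hf' x (hsub hx)).mono hsub)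
    (fun x hx => hf''_nonpos x ⟨hc.1.trans_lt hx.1, hx.2⟩ (hneg x (Ioo_subset_Ioc_self hx)))
  nlinarith [hc.2]

theorem prague_mass_bound_general
    (R R_g k G c M_g : ℝ) (hR : 0 < R) (hk : 0 ≤ k) (hG : 0 < G) (hc : 0 < c)
    (ρ χ χ' χ'' : ℝ → ℝ)
    (hρnonneg : ∀ r ∈ Set.Icc (0:ℝ) R, 0 ≤ ρ r)
    (hχ : ∀ r ∈ Set.Icc (0:ℝ) R, HasDerivWithinAt χ (χ' r) (Set.Icc 0 R) r)
    (hχ' : ∀ r ∈ Set.Icc (0:ℝ) R, HasDerivWithinAt χ' (χ'' r) (Set.Icc 0 R) r)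
    (hode : ∀ r ∈ Set.Icc (0:ℝ) R, χ'' r = k * ρ r * χ r)
    (h0 : χ 0 = 0) (hdR : χ' R = 1) (hvR : χ R = R - R_g)
    (hMg : R_g = G * M_g / (2 * c ^ 2)) :
    R_g ≤ R ∧ M_g ≤ 2 * c ^ 2 * R / G := by
  have hχ''_nonpos : ∀ r ∈ Ioo 0 R, χ r < 0 → χ'' r ≤ 0 := fun r hr hχr => by
    rw [hode r (Ioo_subset_Icc_self hr)]
    exact mul_nonpos_of_nonneg_of_nonpos
      (mul_nonneg hk (hρnonneg r (Ioo_subset_Icc_self hr))) hχr.le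
  have hχR : 0 ≤ χ R :=
    nonneg_of_second_deriv_nonpos_where_neg hR.le hχ hχ' hχ''_nonpos h0.ge (hdR ▸ zero_le_one)
  have hRg : R_g ≤ R := by linarith
  refine ⟨hRg, ?_⟩
  rw [hMg, div_le_iff₀ (by positivity)] at hRg
  rw [le_div_iff₀ hG]
  linarith

/-- The paper's Theorem in ODE form: if `χ` solves
`χ'' = k·ρ·χ` on `[0,R]` with `ρ ≥ 0` continuous, `k ≥ 0`, `χ(0) = 0`,
`χ'(R) = 1` and `χ(R) = R − R_g`, then `R_g ≤ R`; equivalently, with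
`R_g = G·M_g/(2c²)`, the gravitational mass satisfies `M_g ≤ 2c²R/G`. -/
theorem prague_mass_bound
    (R R_g k G c M_g : ℝ) (hR : 0 < R) (hk : 0 ≤ k) (hG : 0 < G) (hc : 0 < c)
    (ρ χ χ' χ'' : ℝ → ℝ)
    (hρcont : ContinuousOn ρ (Set.Icc 0 R))
    (hρnonneg : ∀ r ∈ Set.Icc (0:ℝ) R, 0 ≤ ρ r)
    (hχ : ∀ r ∈ Set.Icc (0:ℝ) R, HasDerivWithinAt χ (χ' r) (Set.Icc 0 R) r)
    (hχ' : ∀ r ∈ Set.Icc (0:ℝ) R, HasDerivWithinAt χ' (χ'' r) (Set.Icc 0 R) r)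
    (hχ''cont : ContinuousOn χ'' (Set.Icc 0 R))
    (hode : ∀ r ∈ Set.Icc (0:ℝ) R, χ'' r = k * ρ r * χ r)
    (h0 : χ 0 = 0) (hdR : χ' R = 1) (hvR : χ R = R - R_g)
    (hMg : R_g = G * M_g / (2 * c ^ 2)) :
    R_g ≤ R ∧ M_g ≤ 2 * c ^ 2 * R / G :=
  prague_mass_bound_general R R_g k G c M_g hR hk hG hc ρ χ χ' χ'' hρnonneg hχ hχ' hode h0 hdR hvR
    hMg
end

section
/- Let R > 0 and let f : [0,R] → ℝ be twice continuously differentiable with f(0) = 0, f'(R) = 1, and such that for every r ∈ [0,R], if f(r) ≤ 0 then f''(r) ≤ 0. Then f(R) ≥ 0. -/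
/-!
Let `s` be the last point of `[0, R]` where `f ≥ 0`; it exists by compactness since `f 0 = 0`.
If `s < R`, then `f < 0` on `(s, R]`, so `f'' ≤ 0` there and `f` is concave on `[s, R]`. A concave
function lies below its tangent line at `R`, whose slope is `f' R = 1`, so
`f R ≥ f s + (R - s) > 0`.
-/

open Set

theorem ContinuousOn.exists_last_nonneg_Icc {a b : ℝ} {f : ℝ → ℝ}
    (hf : ContinuousOn f (Icc a b)) (hab : a ≤ b) (ha : 0 ≤ f a) :
    ∃ s ∈ Icc a b, 0 ≤ f s ∧ ∀ x ∈ Ioc s b, f x < 0 := by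
  have hclosed : IsClosed (Icc a b ∩ f ⁻¹' Ici 0) :=
    hf.preimage_isClosed_of_isClosed isClosed_Icc isClosed_Ici
  obtain ⟨s, ⟨hs, hfs⟩, hmax⟩ :=
    (isCompact_Icc.of_isClosed_subset hclosed inter_subset_left).exists_isGreatest
      ⟨a, left_mem_Icc.2 hab, ha⟩
  refine ⟨s, hs, hfs, fun x hx => ?_⟩
  by_contra! hfx
  exact (hmax ⟨⟨hs.1.trans hx.1.le, hx.2⟩, hfx⟩).not_gt hx.1

theorem concavity_endpoint_nonneg_general
    (R : ℝ) (hR : 0 < R) (f f' f'' : ℝ → ℝ)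
    (hf : ∀ r ∈ Set.Icc (0:ℝ) R, HasDerivWithinAt f (f' r) (Set.Icc 0 R) r)
    (hf' : ∀ r ∈ Set.Icc (0:ℝ) R, HasDerivWithinAt f' (f'' r) (Set.Icc 0 R) r)
    (h0 : f 0 = 0) (hdR : f' R = 1)
    (hconc : ∀ r ∈ Set.Icc (0:ℝ) R, f r ≤ 0 → f'' r ≤ 0) :
    0 ≤ f R := by
  obtain ⟨s, hs, hfs, hneg⟩ := ContinuousOn.exists_last_nonneg_Icc
    (fun r hr => (hf r hr).continuousWithinAt) hR.le h0.ge
  rcases hs.2.eq_or_lt with rfl | hsR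
  · exact hfs
  have hsub : Icc s R ⊆ Icc 0 R := Icc_subset_Icc_left hs.1
  have hIoo : Ioo s R ⊆ Icc 0 R := Ioo_subset_Icc_self.trans hsub
  have hconcave : ConcaveOn ℝ (Icc s R) f := by
    refine concaveOn_of_hasDerivWithinAt2_nonpos (f' := f') (f'' := f'') (convex_Icc s R)
      (fun r hr => (hf r (hsub hr)).continuousWithinAt.mono hsub) ?_ ?_ ?_ <;> rw [interior_Icc]
    · exact fun r hr => (hf r (hIoo hr)).mono hIoo
    · exact fun r hr => (hf' r (hIoo hr)).mono hIoo
    · exact fun r hr => hconc r (hIoo hr) (hneg r (Ioo_subset_Ioc_self hr)).le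
  have hRmem : R ∈ Icc s R := right_mem_Icc.2 hsR.le
  have hslope : 1 ≤ slope f s R := hdR ▸ hconcave.le_slope_of_hasDerivWithinAt
    (left_mem_Icc.2 hsR.le) hRmem hsR ((hf R (hsub hRmem)).mono hsub)
  rw [slope_def_field, le_div_iff₀ (sub_pos.2 hsR)] at hslope
  linarith

/-- The concavity argument: if `f` is twice continuously
differentiable on `[0,R]` with `f(0) = 0`, `f'(R) = 1`, and `f'' ≤ 0` wherever
`f ≤ 0`, then `f(R) ≥ 0`. -/
theorem concavity_endpoint_nonneg
    (R : ℝ) (hR : 0 < R) (f f' f'' : ℝ → ℝ)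
    (hf : ∀ r ∈ Set.Icc (0:ℝ) R, HasDerivWithinAt f (f' r) (Set.Icc 0 R) r)
    (hf' : ∀ r ∈ Set.Icc (0:ℝ) R, HasDerivWithinAt f' (f'' r) (Set.Icc 0 R) r)
    (hf''cont : ContinuousOn f'' (Set.Icc 0 R))
    (h0 : f 0 = 0) (hdR : f' R = 1)
    (hconc : ∀ r ∈ Set.Icc (0:ℝ) R, f r ≤ 0 → f'' r ≤ 0) :
    0 ≤ f R :=
  concavity_endpoint_nonneg_general R hR f f' f'' hf hf' h0 hdR hconc
end

section
/- Let G, c > 0 be real constants, let ρ : ℝ³ → ℝ be a function, and let Ψ : ℝ³ → ℝ be twice continuously differentiable with Ψ(x) > 0 for all x. Define Φ := c²·Ψ². Then Ψ satisfies ΔΨ = (2πG/c²)·ρ·Ψ everywhere on ℝ³ if and only if Φ satisfies the Prague field equation ΔΦ = (4πG/c²)·[ρ·Φ + (c²/(8πG))·‖∇Φ‖²/Φ] everywhere on ℝ³, where Δ is the Euclidean Laplacian and ∇ the gradient on ℝ³. -/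
/-!
Since `Φ = c²Ψ²`, the product rule gives `∇Φ = 2c²Ψ∇Ψ` and `ΔΦ = 2c²(‖∇Ψ‖² + ΨΔΨ)`. The quadratic
gradient term of the Prague equation is then exactly `2c²‖∇Ψ‖²`, so it cancels against the
corresponding term of `ΔΦ`, leaving `2c²ΨΔΨ = 4πGρΨ²`; dividing by `2c²Ψ ≠ 0` gives the linear
equation.
-/

open Real

/-- The `i`-th partial derivative of a function on Euclidean `ℝ³`. -/
noncomputable def pderiv3 (i : Fin 3) (f : EuclideanSpace ℝ (Fin 3) → ℝ)
    (x : EuclideanSpace ℝ (Fin 3)) : ℝ :=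
  fderiv ℝ f x (EuclideanSpace.single i 1)

/-- The Euclidean Laplacian on `ℝ³`. -/
noncomputable def lap3 (f : EuclideanSpace ℝ (Fin 3) → ℝ)
    (x : EuclideanSpace ℝ (Fin 3)) : ℝ :=
  ∑ i, pderiv3 i (pderiv3 i f) x

/-- The squared norm of the gradient, `‖∇f‖²`, on `ℝ³`. -/
noncomputable def gradSq3 (f : EuclideanSpace ℝ (Fin 3) → ℝ)
    (x : EuclideanSpace ℝ (Fin 3)) : ℝ :=
  ∑ i, (pderiv3 i f x) ^ 2

section PartialDerivatives

variable {f g : EuclideanSpace ℝ (Fin 3) → ℝ} {x : EuclideanSpace ℝ (Fin 3)} (i : Fin 3)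

theorem pderiv3_mul (hf : DifferentiableAt ℝ f x) (hg : DifferentiableAt ℝ g x) :
    pderiv3 i (fun y => f y * g y) x = f x * pderiv3 i g x + g x * pderiv3 i f x := by
  rw [pderiv3, fderiv_fun_mul hf hg]
  rfl

theorem pderiv3_const_mul (a : ℝ) (hf : DifferentiableAt ℝ f x) :
    pderiv3 i (fun y => a * f y) x = a * pderiv3 i f x := by
  rw [pderiv3, fderiv_const_mul hf]
  rfl

theorem differentiable_pderiv3 (hf : ContDiff ℝ 2 f) : Differentiable ℝ (pderiv3 i f) :=
  ((hf.fderiv_right (by norm_num)).differentiable one_ne_zero).clm_apply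
    (differentiable_const _)

theorem pderiv3_const_mul_sq (a : ℝ) (hf : Differentiable ℝ f) :
    pderiv3 i (fun y => a * f y ^ 2) = fun y => 2 * a * (f y * pderiv3 i f y) := by
  funext y
  have hsq : DifferentiableAt ℝ (fun y => f y * f y) y := (hf y).mul (hf y)
  simp only [sq]
  rw [pderiv3_const_mul i a hsq, pderiv3_mul i (hf y) (hf y)]
  ring

theorem pderiv3_pderiv3_const_mul_sq (a : ℝ) (hf : ContDiff ℝ 2 f) :
    pderiv3 i (pderiv3 i (fun y => a * f y ^ 2)) x =
      2 * a * (pderiv3 i f x ^ 2 + f x * pderiv3 i (pderiv3 i f) x) := by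
  have hf₁ : Differentiable ℝ f := hf.differentiable (by norm_num)
  have hprod : DifferentiableAt ℝ (fun y => f y * pderiv3 i f y) x :=
    (hf₁ x).mul (differentiable_pderiv3 i hf x)
  rw [pderiv3_const_mul_sq i a hf₁, pderiv3_const_mul i (2 * a) hprod, pderiv3_mul i (hf₁ x) (differentiable_pderiv3 i hf x)]
  ring

end PartialDerivatives

variable {f : EuclideanSpace ℝ (Fin 3) → ℝ}

theorem lap3_const_mul_sq (a : ℝ) (hf : ContDiff ℝ 2 f) (x : EuclideanSpace ℝ (Fin 3)) :
    lap3 (fun y => a * f y ^ 2) x = 2 * a * (gradSq3 f x + f x * lap3 f x) := by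
  simp only [lap3, gradSq3, pderiv3_pderiv3_const_mul_sq _ a hf, Finset.mul_sum,
    ← Finset.sum_add_distrib, mul_add]

theorem gradSq3_const_mul_sq (a : ℝ) (hf : Differentiable ℝ f) (x : EuclideanSpace ℝ (Fin 3)) :
    gradSq3 (fun y => a * f y ^ 2) x = 4 * a ^ 2 * f x ^ 2 * gradSq3 f x := by
  simp only [gradSq3, pderiv3_const_mul_sq _ a hf, Finset.mul_sum]
  exact Finset.sum_congr rfl fun _ _ => by ring

theorem prague_pointwise_iff {G c ρ ψ L g : ℝ} (hG : G ≠ 0) (hc : c ≠ 0) (hψ : ψ ≠ 0) :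
    L = (2 * π * G / c ^ 2) * ρ * ψ ↔
      2 * c ^ 2 * (g + ψ * L) =
        (4 * π * G / c ^ 2) *
          (ρ * (c ^ 2 * ψ ^ 2) +
            (c ^ 2 / (8 * π * G)) * (4 * (c ^ 2) ^ 2 * ψ ^ 2 * g) / (c ^ 2 * ψ ^ 2)) := by
  have hπ : π ≠ 0 := pi_ne_zero
  have hrhs : (4 * π * G / c ^ 2) *
      (ρ * (c ^ 2 * ψ ^ 2) + (c ^ 2 / (8 * π * G)) * (4 * (c ^ 2) ^ 2 * ψ ^ 2 * g) /
        (c ^ 2 * ψ ^ 2)) = 2 * c ^ 2 * g + 4 * π * G * ρ * ψ ^ 2 := by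
    field_simp
    ring
  have hcψ : 2 * c ^ 2 * ψ ≠ 0 := by positivity
  have hlin : 2 * c ^ 2 * ψ * ((2 * π * G / c ^ 2) * ρ * ψ) = 4 * π * G * ρ * ψ ^ 2 := by
    field_simp
    ring
  rw [hrhs, ← mul_right_inj' hcψ, hlin]
  constructor <;> intro h <;> linear_combination h

/-- For `Ψ > 0` of class `C²` and `Φ := c²Ψ²`, the linear
equation `ΔΨ = (2πG/c²)ρΨ` holds everywhere iff `Φ` satisfies Einstein's
1912 Prague field equation `ΔΦ = (4πG/c²)[ρΦ + (c²/(8πG))‖∇Φ‖²/Φ]`. -/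
theorem prague_equation_linearisation
    (G c : ℝ) (hG : 0 < G) (hc : 0 < c)
    (ρ Ψ : EuclideanSpace ℝ (Fin 3) → ℝ)
    (hΨ : ContDiff ℝ 2 Ψ) (hΨpos : ∀ x, 0 < Ψ x) :
    (∀ x, lap3 Ψ x = (2 * π * G / c ^ 2) * ρ x * Ψ x) ↔
    (∀ x, lap3 (fun y => c ^ 2 * (Ψ y) ^ 2) x =
      (4 * π * G / c ^ 2) *
        (ρ x * (c ^ 2 * (Ψ x) ^ 2) +
          (c ^ 2 / (8 * π * G)) *
            gradSq3 (fun y => c ^ 2 * (Ψ y) ^ 2) x / (c ^ 2 * (Ψ x) ^ 2))) := by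
  refine forall_congr' fun x => ?_
  rw [lap3_const_mul_sq _ hΨ, gradSq3_const_mul_sq _ (hΨ.differentiable (by norm_num))]
  exact prague_pointwise_iff hG.ne' hc.ne' (hΨpos x).ne'
end

section
/- Let ω, R > 0 and A, R_g ∈ ℝ. Define χ : (0,∞) → ℝ by χ(r) = A·sinh(ω·r) for r ≤ R and χ(r) = r − R_g for r > R. If χ is continuous at R and differentiable at R, then A = 1/(ω·cosh(ω·R)) and R_g = R − tanh(ω·R)/ω. In particular, if in addition ω = (1/R)·√(3·R_b/R) for some R_b > 0, then with x := R_b/R and y := R_g/R one has y = 1 − tanh(√(3x))/√(3x). -/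
/-!
The exterior solution `r - R_g` and the interior solution `A sinh (ω r)` are two smooth functions
that agree with `χ` on either side of `R`. Since `χ` is differentiable at `R`, the one-sided limits
force equal values, `A sinh (ω R) = R - R_g`, and equal one-sided derivatives,
`A ω cosh (ω R) = 1`. Solving these two equations gives `A` and `R_g`, and substituting
`ω R = √(3 R_b / R)` gives the relation between `x = R_b / R` and `y = R_g / R`.
-/

open Real Filter Topology Set

theorem HasDerivAt.eq_of_eventuallyEq_nhdsWithin {𝕜 F : Type*} [NontriviallyNormedField 𝕜]
    [NormedAddCommGroup F] [NormedSpace 𝕜 F] {f g : 𝕜 → F} {f' g' : F} {s : Set 𝕜} {a : 𝕜}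
    (hs : UniqueDiffWithinAt 𝕜 s a) (hf : HasDerivAt f f' a) (hg : HasDerivAt g g' a)
    (hfg : f =ᶠ[𝓝[s] a] g) (ha : f a = g a) : f' = g' :=
  hs.eq_deriv s hf.hasDerivWithinAt (hg.hasDerivWithinAt.congr_of_eventuallyEq hfg ha)

theorem hasDerivAt_const_mul_sinh_mul (A ω r : ℝ) :
    HasDerivAt (fun r ↦ A * sinh (ω * r)) (A * (ω * cosh (ω * r))) r := by
  simpa [mul_comm] using (((hasDerivAt_id r).const_mul ω).sinh).const_mul A

theorem eq_sub_tanh_div_of_mul_cosh_eq_one {ω R A R_g : ℝ} (hslope : A * (ω * cosh (ω * R)) = 1)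
    (hval : A * sinh (ω * R) = R - R_g) : R_g = R - tanh (ω * R) / ω := by
  rw [tanh_eq_sinh_div_cosh, div_div, mul_comm (cosh _), ← one_div_mul_eq_div,
    ← eq_one_div_of_mul_eq_one_left hslope, hval]
  ring

theorem div_eq_one_sub_tanh_sqrt_div {ω R R_g R_b : ℝ} (hR : R ≠ 0)
    (hRg : R_g = R - tanh (ω * R) / ω) (hω : ω = (1 / R) * √(3 * R_b / R)) :
    R_g / R = 1 - tanh (√(3 * (R_b / R))) / √(3 * (R_b / R)) := by
  have hωR : ω * R = √(3 * (R_b / R)) := by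
    rw [hω, mul_div_assoc]
    field_simp
  rw [← hωR, hRg]
  field_simp

theorem homogeneous_star_matching_general
    (ω R A R_g : ℝ) (hR : 0 < R)
    (χ : ℝ → ℝ)
    (hin : ∀ r : ℝ, 0 < r → r ≤ R → χ r = A * Real.sinh (ω * r))
    (hout : ∀ r : ℝ, R < r → χ r = r - R_g)
    (hdiff : DifferentiableAt ℝ χ R) :
    A = 1 / (ω * Real.cosh (ω * R)) ∧
    R_g = R - Real.tanh (ω * R) / ω ∧
    ∀ R_b : ℝ, 0 < R_b → ω = (1 / R) * Real.sqrt (3 * R_b / R) →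
      R_g / R = 1 - Real.tanh (Real.sqrt (3 * (R_b / R))) /
        Real.sqrt (3 * (R_b / R)) := by
  have hχR : χ R = A * sinh (ω * R) := hin R hR le_rfl
  have hinner : χ =ᶠ[𝓝[≤] R] fun r ↦ A * sinh (ω * r) := by
    filter_upwards [nhdsWithin_le_nhds (Ioi_mem_nhds hR), self_mem_nhdsWithin] with r hr hrR
      using hin r hr hrR
  have houter : χ =ᶠ[𝓝[>] R] fun r ↦ r - R_g := eventually_nhdsWithin_of_forall hout
  have hval : χ R = R - R_g :=
    tendsto_nhds_unique_of_eventuallyEq hdiff.continuousAt.continuousWithinAt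
      (continuous_id.sub continuous_const).continuousWithinAt houter
  have hslope : A * (ω * cosh (ω * R)) = 1 := by
    have hχ' := hdiff.hasDerivAt
    rw [← hχ'.eq_of_eventuallyEq_nhdsWithin (uniqueDiffWithinAt_Iic R)
        (hasDerivAt_const_mul_sinh_mul A ω R) hinner hχR,
      hχ'.eq_of_eventuallyEq_nhdsWithin (uniqueDiffWithinAt_Ioi R)
        ((hasDerivAt_id R).sub_const R_g) houter hval]
  have hRg := eq_sub_tanh_div_of_mul_cosh_eq_one hslope (hχR ▸ hval)
  exact ⟨eq_one_div_of_mul_eq_one_left hslope, hRg,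
    fun _ _ hω ↦ div_eq_one_sub_tanh_sqrt_div hR.ne' hRg hω⟩

/-- Matching the interior solution `χ(r) = A·sinh(ωr)` to
the exterior solution `χ(r) = r − R_g` at the star radius `R` (continuity
and differentiability at `R`) determines `A = 1/(ω·cosh(ωR))` and
`R_g = R − tanh(ωR)/ω`; in particular, if `ω = (1/R)√(3R_b/R)` then with
`x = R_b/R` and `y = R_g/R` one has `y = 1 − tanh(√(3x))/√(3x)`. -/
theorem homogeneous_star_matching
    (ω R A R_g : ℝ) (hω : 0 < ω) (hR : 0 < R)
    (χ : ℝ → ℝ)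
    (hin : ∀ r : ℝ, 0 < r → r ≤ R → χ r = A * Real.sinh (ω * r))
    (hout : ∀ r : ℝ, R < r → χ r = r - R_g)
    (hcont : ContinuousAt χ R) (hdiff : DifferentiableAt ℝ χ R) :
    A = 1 / (ω * Real.cosh (ω * R)) ∧
    R_g = R - Real.tanh (ω * R) / ω ∧
    ∀ R_b : ℝ, 0 < R_b → ω = (1 / R) * Real.sqrt (3 * R_b / R) →
      R_g / R = 1 - Real.tanh (Real.sqrt (3 * (R_b / R))) /
        Real.sqrt (3 * (R_b / R)) :=
  homogeneous_star_matching_general ω R A R_g hR χ hin hout hdiff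
end

section
/- Define y : (0,∞) → ℝ by y(x) := 1 − tanh(√(3x))/√(3x). Then: (i) y is strictly increasing on (0,∞); (ii) 0 < y(x) < 1 for all x > 0; (iii) y(x) → 0 as x → 0⁺; (iv) y(x) → 1 as x → ∞. In particular, y is a strictly monotone bijection from (0,∞) onto (0,1). -/
/-!
`tanh t / t` is the slope of the chord of `tanh` from the origin. Its derivative has the sign of
`t - sinh t cosh t = t - sinh (2t) / 2 < 0`, so it decreases on `(0, ∞)`, from `tanh' 0 = 1`
at `0⁺` to `0` at `∞` (as `tanh < 1`). Hence `y = 1 - tanh √(3x) / √(3x)` increases from `0`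
to `1`, and the intermediate value theorem makes it onto `(0, 1)`.
-/

open Real Filter Topology Set

theorem surjOn_Ioo_of_tendsto_nhdsGT_of_tendsto_atTop {α δ : Type*}
    [ConditionallyCompleteLinearOrder α] [TopologicalSpace α] [OrderTopology α]
    [DenselyOrdered α] [NoMaxOrder α] [LinearOrder δ] [TopologicalSpace δ]
    [OrderTopology δ] {f : α → δ} {a : α} {l u : δ} (hf : ContinuousOn f (Ioi a))
    (hl : Tendsto f (𝓝[>] a) (𝓝 l)) (hu : Tendsto f atTop (𝓝 u)) :
    SurjOn f (Ioi a) (Ioo l u) := by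
  rintro c ⟨hlc, hcu⟩
  obtain ⟨b, hbc, hb⟩ : ∃ b, f b < c ∧ b ∈ Ioi a :=
    ((hl.eventually (gt_mem_nhds hlc)).and self_mem_nhdsWithin).exists
  obtain ⟨b', hcb', hbb'⟩ : ∃ b', c < f b' ∧ b ≤ b' :=
    ((hu.eventually (lt_mem_nhds hcu)).and (eventually_ge_atTop b)).exists
  obtain ⟨x, hx, rfl⟩ := intermediate_value_Icc hbb'
    (hf.mono fun x hx => lt_of_lt_of_le hb hx.1) ⟨hbc.le, hcb'.le⟩
  exact ⟨x, lt_of_lt_of_le hb hx.1, rfl⟩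

namespace Real

theorem hasDerivAt_tanh (t : ℝ) : HasDerivAt tanh (1 / cosh t ^ 2) t := by
  rw [funext tanh_eq_sinh_div_cosh]
  refine ((hasDerivAt_sinh t).div (hasDerivAt_cosh t) (cosh_pos t).ne').congr_deriv ?_
  rw [← cosh_sq_sub_sinh_sq t]
  ring

theorem continuous_tanh : Continuous tanh :=
  continuous_iff_continuousAt.2 fun t => (hasDerivAt_tanh t).continuousAt

theorem tanh_pos {t : ℝ} (ht : 0 < t) : 0 < tanh t := by
  rw [tanh_eq_sinh_div_cosh]
  exact div_pos (sinh_pos_iff.2 ht) (cosh_pos t)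

theorem self_lt_sinh_mul_cosh {t : ℝ} (ht : 0 < t) : t < sinh t * cosh t := by
  have := self_lt_sinh_iff.2 (mul_pos two_pos ht)
  rw [sinh_two_mul] at this
  linarith

theorem hasDerivAt_tanh_div_self {t : ℝ} (ht : t ≠ 0) :
    HasDerivAt (fun s => tanh s / s) ((t - sinh t * cosh t) / (t * cosh t) ^ 2) t := by
  refine ((hasDerivAt_tanh t).div (hasDerivAt_id t) ht).congr_deriv ?_
  have := (cosh_pos t).ne'
  rw [tanh_eq_sinh_div_cosh, id]
  field_simp

theorem strictAntiOn_tanh_div_self : StrictAntiOn (fun t => tanh t / t) (Ioi 0) := by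
  refine strictAntiOn_of_hasDerivWithinAt_neg
    (f' := fun t => (t - sinh t * cosh t) / (t * cosh t) ^ 2) (convex_Ioi 0)
    (continuous_tanh.continuousOn.div continuousOn_id fun t ht => ht.ne') ?_ ?_ <;>
    rw [interior_Ioi]
  · exact fun t ht => (hasDerivAt_tanh_div_self (ne_of_gt ht)).hasDerivWithinAt
  · exact fun t ht => div_neg_of_neg_of_pos (sub_neg.2 (self_lt_sinh_mul_cosh ht))
      (pow_pos (mul_pos ht (cosh_pos t)) 2)

theorem tendsto_tanh_div_self_nhdsNE_zero : Tendsto (fun t => tanh t / t) (𝓝[≠] 0) (𝓝 1) := by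
  have h := hasDerivAt_iff_tendsto_slope.1 (hasDerivAt_tanh 0)
  simp only [cosh_zero, one_pow, div_one] at h
  refine h.congr fun t => ?_
  simp [slope_def_field, tanh_zero]

theorem tendsto_tanh_div_self_atTop : Tendsto (fun t => tanh t / t) atTop (𝓝 0) := by
  refine tendsto_of_tendsto_of_tendsto_of_le_of_le' tendsto_const_nhds tendsto_inv_atTop_zero ?_ ?_
  · filter_upwards [eventually_gt_atTop 0] with t ht
    exact div_nonneg (tanh_pos ht).le ht.le
  · filter_upwards [eventually_gt_atTop 0] with t ht
    rw [inv_eq_one_div]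
    exact div_le_div_of_nonneg_right (tanh_lt_one t).le ht.le

theorem tanh_div_self_lt_one {t : ℝ} (ht : 0 < t) : tanh t / t < 1 := by
  have hle : tanh (t / 2) / (t / 2) ≤ 1 := by
    refine ge_of_tendsto (tendsto_tanh_div_self_nhdsNE_zero.mono_left (nhdsGT_le_nhdsNE 0)) ?_
    filter_upwards [Ioo_mem_nhdsGT (half_pos ht)] with s hs
    exact (strictAntiOn_tanh_div_self hs.1 (half_pos ht) hs.2).le
  exact (strictAntiOn_tanh_div_self (half_pos ht) ht (half_lt_self ht)).trans_le hle

theorem tendsto_sqrt_mul_nhdsGT_zero {c : ℝ} (hc : 0 < c) :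
    Tendsto (fun x => √(c * x)) (𝓝[>] 0) (𝓝[>] 0) := by
  refine tendsto_nhdsWithin_iff.2 ⟨?_, ?_⟩
  · exact ((continuous_const.mul continuous_id).sqrt.tendsto' 0 0 (by simp)).mono_left
      nhdsWithin_le_nhds
  · filter_upwards [self_mem_nhdsWithin] with x (hx : 0 < x)
    exact sqrt_pos.2 (mul_pos hc hx)

theorem tendsto_sqrt_mul_atTop {c : ℝ} (hc : 0 < c) :
    Tendsto (fun x => √(c * x)) atTop atTop :=
  tendsto_sqrt_atTop.comp (tendsto_id.const_mul_atTop hc)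

end Real

/-- The homogeneous-star relation
`y(x) = 1 − tanh(√(3x))/√(3x)` is (i) strictly increasing on `(0,∞)`,
(ii) takes values in `(0,1)`, (iii) tends to `0` as `x → 0⁺`,
(iv) tends to `1` as `x → ∞`; in particular it is a strictly monotone
bijection from `(0,∞)` onto `(0,1)`. -/
theorem homogeneous_star_mass_relation_monotone :
    StrictMonoOn (fun x : ℝ => 1 - Real.tanh (Real.sqrt (3 * x)) / Real.sqrt (3 * x))
      (Set.Ioi 0) ∧
    (∀ x : ℝ, 0 < x →
      0 < 1 - Real.tanh (Real.sqrt (3 * x)) / Real.sqrt (3 * x) ∧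
      1 - Real.tanh (Real.sqrt (3 * x)) / Real.sqrt (3 * x) < 1) ∧
    Tendsto (fun x : ℝ => 1 - Real.tanh (Real.sqrt (3 * x)) / Real.sqrt (3 * x))
      (𝓝[>] 0) (𝓝 0) ∧
    Tendsto (fun x : ℝ => 1 - Real.tanh (Real.sqrt (3 * x)) / Real.sqrt (3 * x))
      atTop (𝓝 1) ∧
    Set.BijOn (fun x : ℝ => 1 - Real.tanh (Real.sqrt (3 * x)) / Real.sqrt (3 * x))
      (Set.Ioi 0) (Set.Ioo 0 1) := by
  have hsqrt_pos {x : ℝ} (hx : 0 < x) : 0 < √(3 * x) := sqrt_pos.2 (by positivity)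
  have hmono : StrictMonoOn (fun x : ℝ => 1 - tanh √(3 * x) / √(3 * x)) (Ioi 0) :=
    fun a ha b hb hab => sub_lt_sub_left (strictAntiOn_tanh_div_self (hsqrt_pos ha) (hsqrt_pos hb)
      (sqrt_lt_sqrt (mul_pos three_pos ha).le (mul_lt_mul_of_pos_left hab three_pos))) 1
  have hbounds (x : ℝ) (hx : 0 < x) :
      0 < 1 - tanh √(3 * x) / √(3 * x) ∧ 1 - tanh √(3 * x) / √(3 * x) < 1 :=
    ⟨sub_pos.2 (tanh_div_self_lt_one (hsqrt_pos hx)),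
      sub_lt_self 1 (div_pos (tanh_pos (hsqrt_pos hx)) (hsqrt_pos hx))⟩
  have hzero : Tendsto (fun x : ℝ => 1 - tanh √(3 * x) / √(3 * x)) (𝓝[>] 0) (𝓝 0) := by
    simpa using ((tendsto_tanh_div_self_nhdsNE_zero.mono_left (nhdsGT_le_nhdsNE 0)).comp
      (tendsto_sqrt_mul_nhdsGT_zero three_pos)).const_sub 1
  have hone : Tendsto (fun x : ℝ => 1 - tanh √(3 * x) / √(3 * x)) atTop (𝓝 1) := by
    simpa using (tendsto_tanh_div_self_atTop.comp (tendsto_sqrt_mul_atTop three_pos)).const_sub 1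
  have hsqrt_cont : Continuous fun x : ℝ => √(3 * x) := by fun_prop
  have hcont : ContinuousOn (fun x : ℝ => 1 - tanh √(3 * x) / √(3 * x)) (Ioi 0) :=
    continuousOn_const.sub ((continuous_tanh.comp hsqrt_cont).continuousOn.div
      hsqrt_cont.continuousOn fun x hx => (hsqrt_pos hx).ne')
  exact ⟨hmono, hbounds, hzero, hone, fun x hx => hbounds x hx, hmono.injOn,
    surjOn_Ioo_of_tendsto_nhdsGT_of_tendsto_atTop hcont hzero hone⟩
end

section
/- Define g : (0,∞) → ℝ by g(x) := (1/x)·(1 − tanh(√(3x))/√(3x)). Then g is strictly decreasing on (0,∞): for all real x₁, x₂ with 0 < x₁ < x₂ one has g(x₂) < g(x₁). -/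
/-!
With `u = √(3x)` the ratio becomes `3 (u cosh u - sinh u) / (u³ cosh u)`. The numerator of the
derivative of this function of `u` is `u²` times `u sinh² u + 3 sinh u cosh u - 3u cosh² u`, which
vanishes at `0` and has derivative `4 sinh u (sinh u - u cosh u) < 0`, hence is negative for `u > 0`.
-/

open Real Set

theorem lt_of_hasDerivAt_neg {f f' : ℝ → ℝ} {a x : ℝ} (hf : ∀ y, HasDerivAt f (f' y) y)
    (hf' : ∀ y, a < y → f' y < 0) (hx : a < x) : f x < f a :=
  strictAntiOn_of_hasDerivWithinAt_neg (convex_Ici a)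
    (HasDerivAt.continuousOn fun y _ ↦ hf y) (fun y _ ↦ (hf y).hasDerivWithinAt)
    (fun y hy ↦ hf' y (by simpa using hy)) self_mem_Ici hx.le hx

namespace Real

theorem sinh_lt_mul_cosh {u : ℝ} (hu : 0 < u) : sinh u < u * cosh u := by
  have hderiv (t : ℝ) : HasDerivAt (fun t ↦ sinh t - t * cosh t) (-(t * sinh t)) t :=
    ((hasDerivAt_sinh t).fun_sub ((hasDerivAt_id' t).fun_mul (hasDerivAt_cosh t))).congr_deriv
      (by ring)
  simpa using lt_of_hasDerivAt_neg hderiv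
    (fun t ht ↦ neg_neg_of_pos (mul_pos ht (sinh_pos_iff.2 ht))) hu

theorem mul_sinh_sq_add_three_mul_sinh_mul_cosh_lt {u : ℝ} (hu : 0 < u) :
    u * sinh u ^ 2 + 3 * sinh u * cosh u < 3 * u * cosh u ^ 2 := by
  have hderiv (t : ℝ) : HasDerivAt (fun t ↦ t * sinh t ^ 2 + 3 * sinh t * cosh t - 3 * t * cosh t ^ 2)
      (4 * sinh t * (sinh t - t * cosh t)) t := by
    have h := ((hasDerivAt_id' t).fun_mul ((hasDerivAt_sinh t).fun_pow 2)).fun_add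
      (((hasDerivAt_sinh t).const_mul 3).fun_mul (hasDerivAt_cosh t)) |>.fun_sub
      (((hasDerivAt_id' t).const_mul 3).fun_mul ((hasDerivAt_cosh t).fun_pow 2))
    exact h.congr_deriv (by norm_num; ring)
  have hneg (t : ℝ) (ht : 0 < t) : 4 * sinh t * (sinh t - t * cosh t) < 0 :=
    mul_neg_of_pos_of_neg (by simpa using sinh_pos_iff.2 ht) (sub_neg.2 (sinh_lt_mul_cosh ht))
  simpa [sub_neg] using lt_of_hasDerivAt_neg hderiv hneg hu

theorem strictAntiOn_mul_cosh_sub_sinh_div :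
    StrictAntiOn (fun u ↦ (u * cosh u - sinh u) / (u ^ 3 * cosh u)) (Ioi 0) := by
  have hderiv (u : ℝ) (hu : 0 < u) : HasDerivAt (fun u ↦ (u * cosh u - sinh u) / (u ^ 3 * cosh u))
      (u ^ 2 * (u * sinh u ^ 2 + 3 * sinh u * cosh u - 3 * u * cosh u ^ 2) / (u ^ 3 * cosh u) ^ 2)
      u := by
    have hnum := ((hasDerivAt_id' u).fun_mul (hasDerivAt_cosh u)).fun_sub (hasDerivAt_sinh u)
    have hden := (hasDerivAt_pow 3 u).fun_mul (hasDerivAt_cosh u)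
    exact (hnum.fun_div hden (by positivity)).congr_deriv (by norm_num; ring)
  refine strictAntiOn_of_hasDerivWithinAt_neg (convex_Ioi 0) (HasDerivAt.continuousOn hderiv)
    (fun u hu ↦ (hderiv u (by simpa using hu)).hasDerivWithinAt) fun u hu ↦ ?_
  have hu : 0 < u := by simpa using hu
  exact div_neg_of_neg_of_pos (mul_neg_of_pos_of_neg (by positivity)
    (sub_neg.2 (mul_sinh_sq_add_three_mul_sinh_mul_cosh_lt hu))) (by positivity)

theorem one_div_mul_one_sub_tanh_div {x u : ℝ} (hu : u ≠ 0) (hx : u ^ 2 = 3 * x) :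
    1 / x * (1 - tanh u / u) = 3 * ((u * cosh u - sinh u) / (u ^ 3 * cosh u)) := by
  have hx : x = u ^ 2 / 3 := by linarith
  subst hx
  rw [tanh_eq_sinh_div_cosh]
  field_simp [(cosh_pos u).ne']

end Real

/-- The gravitational-to-bare mass ratio
`g(x) = (1/x)(1 − tanh(√(3x))/√(3x))` is strictly decreasing on `(0,∞)`. -/
theorem mass_ratio_strictAnti :
    ∀ x₁ x₂ : ℝ, 0 < x₁ → x₁ < x₂ →
      (1 / x₂) * (1 - Real.tanh (Real.sqrt (3 * x₂)) / Real.sqrt (3 * x₂)) <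
      (1 / x₁) * (1 - Real.tanh (Real.sqrt (3 * x₁)) / Real.sqrt (3 * x₁)) := by
  intro x₁ x₂ hx₁ hlt
  have hsqrt_pos {x : ℝ} (hx : 0 < x) : 0 < √(3 * x) := sqrt_pos.2 (by positivity)
  have hsq {x : ℝ} (hx : 0 < x) : √(3 * x) ^ 2 = 3 * x := sq_sqrt (by positivity)
  have hx₂ : 0 < x₂ := hx₁.trans hlt
  rw [one_div_mul_one_sub_tanh_div (hsqrt_pos hx₁).ne' (hsq hx₁),
    one_div_mul_one_sub_tanh_div (hsqrt_pos hx₂).ne' (hsq hx₂)]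
  exact mul_lt_mul_of_pos_left (strictAntiOn_mul_cosh_sub_sinh_div (hsqrt_pos hx₁)
    (hsqrt_pos hx₂) (sqrt_lt_sqrt (by positivity) (by linarith))) three_pos
end

section
/- Let ω, R > 0, let M_b, c > 0, and set Ψ(r) := sinh(ω·r)/(ω·r·cosh(ω·R)) for r ∈ (0,R]. Then the matter energy of the homogeneous star, E_matter := (3·M_b·c²/R³)·∫₀^R r²·Ψ(r)² dr, is given exactly by E_matter = 3·M_b·c²·(sinh(2ωR) − 2ωR)/(4·(ωR)³·cosh(ωR)²). -/
open Real intervalIntegral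

/-! The factor `r²` of the volume element cancels the `r⁻²` of `Ψ²`, so the integral is
`∫₀^R sinh²(ωr) dr / (ω cosh ωR)²`, and `sinh² x = (cosh 2x - 1) / 2` gives the primitive
`sinh(2ωr)/(4ω) - r/2`. -/

theorem hasDerivAt_sinh_two_mul_div_sub {ω : ℝ} (hω : ω ≠ 0) (r : ℝ) :
    HasDerivAt (fun r => sinh (2 * ω * r) / (4 * ω) - r / 2) (sinh (ω * r) ^ 2) r := by
  have hlin : HasDerivAt (fun r : ℝ => 2 * ω * r) (2 * ω) r := by
    simpa using (hasDerivAt_id r).const_mul (2 * ω)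
  have hcosh : cosh (2 * ω * r) = 2 * sinh (ω * r) ^ 2 + 1 := by
    rw [mul_assoc, cosh_two_mul, cosh_sq]
    ring
  refine (((hasDerivAt_sinh _).comp r hlin).div_const (4 * ω) |>.sub
    ((hasDerivAt_id r).div_const 2)).congr_deriv ?_
  rw [hcosh]
  field_simp
  ring

theorem integral_sinh_mul_sq {ω : ℝ} (hω : ω ≠ 0) (a b : ℝ) :
    ∫ r in a..b, sinh (ω * r) ^ 2
      = (sinh (2 * ω * b) - sinh (2 * ω * a)) / (4 * ω) - (b - a) / 2 := by
  rw [integral_eq_sub_of_hasDerivAt (fun r _ => hasDerivAt_sinh_two_mul_div_sub hω r)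
    ((by fun_prop : Continuous fun r => sinh (ω * r) ^ 2).intervalIntegrable _ _)]
  ring

theorem homogeneous_star_matter_energy_general
    (ω R M_b c : ℝ) (hω : 0 < ω) :
    (3 * M_b * c ^ 2 / R ^ 3) *
      ∫ r in (0:ℝ)..R,
        r ^ 2 * (Real.sinh (ω * r) / (ω * r * Real.cosh (ω * R))) ^ 2 =
    3 * M_b * c ^ 2 * (Real.sinh (2 * ω * R) - 2 * ω * R) /
      (4 * (ω * R) ^ 3 * Real.cosh (ω * R) ^ 2) := by
  have hintegrand : ∀ᵐ r, r ^ 2 * (sinh (ω * r) / (ω * r * cosh (ω * R))) ^ 2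
      = sinh (ω * r) ^ 2 / (ω * cosh (ω * R)) ^ 2 := by
    filter_upwards [MeasureTheory.Measure.ae_ne MeasureTheory.volume 0] with r hr
    field_simp
  rw [integral_congr_ae (hintegrand.mono fun r hr _ => hr), integral_div,
    integral_sinh_mul_sq hω.ne']
  simp only [mul_zero, sinh_zero, sub_zero]
  field_simp
  ring

/-- Matter energy of a homogeneous star: with interior
solution `Ψ(r) = sinh(ωr)/(ωr·cosh(ωR))`, the matter energy
`E_matter = (3M_b c²/R³)·∫₀^R r²Ψ(r)² dr` equals
`3M_b c²·(sinh(2ωR) − 2ωR)/(4(ωR)³·cosh(ωR)²)`. -/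
theorem homogeneous_star_matter_energy
    (ω R M_b c : ℝ) (hω : 0 < ω) (hR : 0 < R) (hMb : 0 < M_b) (hc : 0 < c) :
    (3 * M_b * c ^ 2 / R ^ 3) *
      ∫ r in (0:ℝ)..R,
        r ^ 2 * (Real.sinh (ω * r) / (ω * r * Real.cosh (ω * R))) ^ 2 =
    3 * M_b * c ^ 2 * (Real.sinh (2 * ω * R) - 2 * ω * R) /
      (4 * (ω * R) ^ 3 * Real.cosh (ω * R) ^ 2) :=
  homogeneous_star_matter_energy_general ω R M_b c hω
end
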